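/- arXiv:2604.09538 — 3 statements merged into one kernel-verified Lean document; each statement's English description precedes it below -/
import Mathlib

section
/- If the stencil is symmetric (for t ∈ T also −t ∈ T, and p(−t) = p(t), q(−t) = q(t)), then the operator norm of the Difference-of-Gaussian operator equals the maximum modulus of its transfer function over all frequencies: ‖A‖ = max_{ω ∈ G} |μ(ω)|. -/
open scoped BigOperators

noncomputable section

/-- The periodic grid `ℤ_N^D`. -/
abbrev Grid (N D : ℕ) := Fin D → ZMod N

/-- The cyclic shift operator `S_t` on the data space, `(S_t v)(j) = v (j - t)`. -/
def shiftOp (N D : ℕ) [NeZero N] (t : Grid N D) :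
    EuclideanSpace ℂ (Grid N D) →L[ℂ] EuclideanSpace ℂ (Grid N D) :=
  LinearMap.toContinuousLinearMap
    { toFun := fun v => WithLp.toLp 2 (fun j => v (j - t) : Grid N D → ℂ)
      map_add' := fun _ _ => rfl
      map_smul' := fun _ _ => rfl }

/-- `⟨ω, j⟩ = ∑ k, (ω k).val * (j k).val`. -/
def pairing (N D : ℕ) (ω j : Grid N D) : ℕ := ∑ k, (ω k).val * (j k).val

/-- The Fourier basis vector `f_ω (j) = N^(-D/2) exp(2πi⟨ω,j⟩/N)`. -/
def fourierVec (N D : ℕ) [NeZero N] (ω : Grid N D) : EuclideanSpace ℂ (Grid N D) :=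
  WithLp.toLp 2 (fun j => (N : ℂ) ^ (-(D : ℂ) / 2) *
    Complex.exp (2 * Real.pi * Complex.I * (pairing N D ω j : ℂ) / (N : ℂ)) : Grid N D → ℂ)

/-- The Difference-of-Gaussian operator `A = ∑_{t ∈ T} (p t - q t) • S_t`. -/
def dogOp (N D : ℕ) [NeZero N] (T : Finset (Grid N D)) (p q : Grid N D → ℝ) :
    EuclideanSpace ℂ (Grid N D) →L[ℂ] EuclideanSpace ℂ (Grid N D) :=
  ∑ t ∈ T, ((p t - q t : ℝ) : ℂ) • shiftOp N D t

/-- The transfer function `μ(ω) = ∑_{t ∈ T} (p t - q t) exp(-2πi⟨ω,t⟩/N)`. -/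
def transfer (N D : ℕ) (T : Finset (Grid N D)) (p q : Grid N D → ℝ) (ω : Grid N D) : ℂ :=
  ∑ t ∈ T, ((p t - q t : ℝ) : ℂ) *
    Complex.exp (-(2 * Real.pi * Complex.I * (pairing N D ω t : ℂ)) / (N : ℂ))

set_option linter.unusedSectionVars false
set_option maxHeartbeats 1000000

section EChar
variable (N : ℕ) [NeZero N]

def eChar (x : ZMod N) : ℂ :=
  Complex.exp (2 * Real.pi * Complex.I * (x.val : ℂ) / (N : ℂ))

lemma hNc : (N : ℂ) ≠ 0 := Nat.cast_ne_zero.2 (NeZero.ne N)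

lemma eChar_natCast (n : ℕ) :
    eChar N (n : ZMod N) = Complex.exp (2 * Real.pi * Complex.I * (n : ℂ) / (N : ℂ)) := by
  have h := Nat.div_add_mod n N
  have hval : ((n : ZMod N)).val = n % N := ZMod.val_natCast N n
  rw [eChar, hval]
  have : (n : ℂ) = (N : ℂ) * (n / N : ℕ) + ((n % N : ℕ) : ℂ) := by
    rw [← Nat.cast_mul, ← Nat.cast_add, h]
  rw [this, mul_add, add_div, Complex.exp_add]
  have h1 : 2 * (Real.pi:ℂ) * Complex.I * ((N:ℂ) * ((n / N : ℕ):ℂ)) / (N : ℂ)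
      = ((n / N : ℕ):ℂ) * (2 * Real.pi * Complex.I) := by
    field_simp [hNc N]
  rw [h1, Complex.exp_nat_mul, Complex.exp_two_pi_mul_I, one_pow, one_mul]

lemma eChar_add (x y : ZMod N) : eChar N (x + y) = eChar N x * eChar N y := by
  conv_lhs => rw [← ZMod.natCast_zmod_val x, ← ZMod.natCast_zmod_val y, ← Nat.cast_add,
    eChar_natCast]
  rw [Nat.cast_add, mul_add, add_div, Complex.exp_add, eChar, eChar]

lemma eChar_zero : eChar N 0 = 1 := by simp [eChar]

lemma eChar_ne_zero (x : ZMod N) : eChar N x ≠ 0 := Complex.exp_ne_zero _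

lemma eChar_neg (x : ZMod N) : eChar N (-x) = (eChar N x)⁻¹ := by
  have h := eChar_add N x (-x)
  rw [add_neg_cancel, eChar_zero] at h
  exact (inv_eq_of_mul_eq_one_right h.symm).symm

lemma eChar_sub (x y : ZMod N) : eChar N (x - y) = eChar N x * (eChar N y)⁻¹ := by
  have h := eChar_add N (x - y) y
  rw [sub_add_cancel] at h
  rw [← div_eq_mul_inv, eq_div_iff (eChar_ne_zero N y)]
  exact h.symm

lemma eChar_conj (x : ZMod N) : (starRingEnd ℂ) (eChar N x) = (eChar N x)⁻¹ := by
  rw [eChar, ← Complex.exp_conj, ← Complex.exp_neg]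
  congr 1
  rw [map_div₀, map_mul, map_mul, map_mul]
  rw [Complex.conj_I, Complex.conj_natCast, Complex.conj_natCast, Complex.conj_ofReal,
    map_ofNat]
  ring

lemma eChar_abs (x : ZMod N) : ‖eChar N x‖ = 1 := by
  rw [eChar, show 2 * (Real.pi:ℂ) * Complex.I * ((x.val : ℕ):ℂ) / (N:ℂ)
    = ((2 * Real.pi * x.val / N : ℝ):ℂ) * Complex.I by push_cast; ring]
  exact Complex.norm_exp_ofReal_mul_I _

lemma eChar_ne_one {a : ZMod N} (ha : a ≠ 0) : eChar N a ≠ 1 := by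
  rw [eChar]
  intro hc
  rw [Complex.exp_eq_one_iff] at hc
  obtain ⟨n, hn⟩ := hc
  have hNne : (N:ℂ) ≠ 0 := hNc N
  have h2 : (2 * (Real.pi:ℂ) * Complex.I) ≠ 0 := by
    simp [Real.pi_ne_zero, Complex.I_ne_zero, Complex.ofReal_ne_zero]
  have hn' : ((a.val : ℕ):ℂ) / (N:ℂ) = (n:ℂ) :=
    mul_left_cancel₀ h2 (by linear_combination hn)
  have hval : ((a.val : ℕ):ℂ) = (n:ℂ) * (N:ℂ) := (div_eq_iff hNne).1 hn'
  have hZ : ((a.val : ℕ) : ℤ) = n * (N : ℤ) := by exact_mod_cast hval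
  have hlt : ((a.val : ℕ) : ℤ) < (N : ℤ) := by exact_mod_cast ZMod.val_lt a
  have hpos : 0 < ((a.val : ℕ) : ℤ) := by
    have : a.val ≠ 0 := fun h => ha (by rwa [ZMod.val_eq_zero] at h)
    exact_mod_cast Nat.pos_of_ne_zero this
  have hN1 : (1:ℤ) ≤ (N:ℤ) := by
    have := Nat.one_le_iff_ne_zero.2 (NeZero.ne N); exact_mod_cast this
  rcases le_or_gt n 0 with h | h
  · nlinarith
  · have h1 : 1 ≤ n := h
    nlinarith

lemma eChar_sum_eq_zero {a : ZMod N} (ha : a ≠ 0) : ∑ x : ZMod N, eChar N (a * x) = 0 := by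
  have key : (∑ x : ZMod N, eChar N (a * x)) * eChar N a = ∑ x : ZMod N, eChar N (a * x) := by
    rw [Finset.sum_mul]
    rw [← Equiv.sum_comp (Equiv.addRight (1 : ZMod N)) (fun x => eChar N (a * x))]
    apply Finset.sum_congr rfl
    intro x _
    rw [← eChar_add]
    congr 1
    simp [mul_add]
  have h0 : (∑ x : ZMod N, eChar N (a * x)) * (eChar N a - 1) = 0 := by
    rw [mul_sub, key, mul_one, sub_self]
  rcases mul_eq_zero.1 h0 with h | h
  · exact h
  · exact absurd (sub_eq_zero.1 h) (eChar_ne_one N ha)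

end EChar

section Chunk2
variable (N : ℕ) [NeZero N] (D : ℕ)


def dotZ (ω j : Grid N D) : ZMod N := ∑ k, ω k * j k

lemma eChar_dotZ (ω j : Grid N D) :
    eChar N (dotZ N D ω j)
      = Complex.exp (2 * Real.pi * Complex.I * (pairing N D ω j : ℂ) / (N : ℂ)) := by
  have h : dotZ N D ω j = ((pairing N D ω j : ℕ) : ZMod N) := by
    unfold dotZ pairing
    push_cast
    exact Finset.sum_congr rfl fun k _ => by
      rw [ZMod.natCast_zmod_val, ZMod.natCast_zmod_val]
  rw [h, eChar_natCast]

lemma fourierVec_eq (ω : Grid N D) (j : Grid N D) :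
    fourierVec N D ω j = (N : ℂ) ^ (-(D : ℂ) / 2) * eChar N (dotZ N D ω j) := by
  rw [fourierVec, eChar_dotZ]

lemma dotZ_sub_right (ω j t : Grid N D) :
    dotZ N D ω (j - t) = dotZ N D ω j - dotZ N D ω t := by
  unfold dotZ
  rw [← Finset.sum_sub_distrib]
  exact Finset.sum_congr rfl fun k _ => by simp [mul_sub]

lemma dotZ_sub_left (ω ω' j : Grid N D) :
    dotZ N D (ω' - ω) j = dotZ N D ω' j - dotZ N D ω j := by
  unfold dotZ
  rw [← Finset.sum_sub_distrib]
  exact Finset.sum_congr rfl fun k _ => by simp [sub_mul]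

lemma eChar_sum_dotZ (δ : Grid N D) :
    ∑ j : Grid N D, eChar N (dotZ N D δ j)
      = if δ = 0 then ((N : ℂ) ^ D) else 0 := by
  have hsplit : ∀ j : Grid N D, eChar N (dotZ N D δ j) = ∏ k, eChar N (δ k * j k) := by
    intro j
    unfold dotZ
    classical
    induction (Finset.univ : Finset (Fin D)) using Finset.cons_induction with
    | empty => simpa using eChar_zero N
    | cons a s ha ih => rw [Finset.sum_cons, Finset.prod_cons, eChar_add, ih]
  simp_rw [hsplit]
  rw [← Fintype.prod_sum (fun k x => eChar N (δ k * x))]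
  by_cases hδ : δ = 0
  · subst hδ
    simp [eChar_zero, Finset.card_univ, ZMod.card]
  · obtain ⟨k0, hk0⟩ : ∃ k, δ k ≠ 0 := by
      by_contra h
      push_neg at h
      exact hδ (funext h)
    rw [if_neg hδ]
    apply Finset.prod_eq_zero (Finset.mem_univ k0)
    exact eChar_sum_eq_zero N hk0

lemma normconst_abs :
    ‖(N : ℂ) ^ (-(D : ℂ) / 2)‖ = (N : ℝ) ^ (-(D : ℝ) / 2) := by
  have hN : (0 : ℝ) < N := Nat.cast_pos.2 (Nat.pos_of_ne_zero (NeZero.ne N))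
  rw [show ((N : ℂ)) = ((N : ℝ) : ℂ) by push_cast; rfl]
  rw [Complex.norm_cpow_eq_rpow_re_of_pos hN]
  congr 1
  simp [Complex.div_re]

lemma normconst_sq :
    ((N : ℝ) ^ (-(D : ℝ) / 2)) ^ 2 * (N : ℝ) ^ D = 1 := by
  have hN : (0 : ℝ) < N := Nat.cast_pos.2 (Nat.pos_of_ne_zero (NeZero.ne N))
  rw [← Real.rpow_natCast (N:ℝ) D, ← Real.rpow_two, ← Real.rpow_mul hN.le, ← Real.rpow_add hN]
  norm_num

lemma fourier_orthonormal : Orthonormal ℂ (fourierVec N D) := by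
  rw [orthonormal_iff_ite]
  intro ω ω'
  classical
  rw [PiLp.inner_apply]
  simp_rw [RCLike.inner_apply', fourierVec_eq]
  set c := (N : ℂ) ^ (-(D : ℂ) / 2) with hc
  have hterm : ∀ j : Grid N D,
      (starRingEnd ℂ) (c * eChar N (dotZ N D ω j)) * (c * eChar N (dotZ N D ω' j))
      = ((starRingEnd ℂ) c * c) * eChar N (dotZ N D (ω' - ω) j) := by
    intro j
    rw [map_mul, eChar_conj, dotZ_sub_left, eChar_sub]
    ring
  simp_rw [hterm]
  rw [← Finset.mul_sum, eChar_sum_dotZ]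
  have hcc : (starRingEnd ℂ) c * c = ((((N:ℝ) ^ (-(D:ℝ)/2))^2 : ℝ) : ℂ) := by
    rw [mul_comm, Complex.mul_conj, Complex.normSq_eq_norm_sq, normconst_abs]
  by_cases h : ω = ω'
  · subst h
    rw [if_pos rfl, if_pos (sub_self ω), hcc]
    have : ((N:ℂ) ^ D) = (((N:ℝ) ^ D : ℝ) : ℂ) := by push_cast; ring
    rw [this, ← Complex.ofReal_mul, normconst_sq, Complex.ofReal_one]
  · rw [if_neg h, if_neg (sub_ne_zero.2 (Ne.symm h)), mul_zero]

lemma shiftOp_apply (t : Grid N D) (v : EuclideanSpace ℂ (Grid N D)) (j : Grid N D) :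
    shiftOp N D t v j = v (j - t) := rfl

lemma shift_fourier (t ω : Grid N D) :
    shiftOp N D t (fourierVec N D ω) = (eChar N (dotZ N D ω t))⁻¹ • fourierVec N D ω := by
  ext j
  rw [shiftOp_apply, PiLp.smul_apply, smul_eq_mul, fourierVec_eq, fourierVec_eq,
    dotZ_sub_right, eChar_sub]
  ring

lemma transfer_coeff (ω t : Grid N D) :
    Complex.exp (-(2 * Real.pi * Complex.I * (pairing N D ω t : ℂ)) / (N : ℂ))
      = (eChar N (dotZ N D ω t))⁻¹ := by
  rw [eChar_dotZ, ← Complex.exp_neg, neg_div]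

lemma dog_fourier (T : Finset (Grid N D)) (p q : Grid N D → ℝ) (ω : Grid N D) :
    dogOp N D T p q (fourierVec N D ω)
      = transfer N D T p q ω • fourierVec N D ω := by
  rw [dogOp, ContinuousLinearMap.sum_apply]
  simp_rw [ContinuousLinearMap.smul_apply, shift_fourier, smul_smul]
  rw [transfer, ← Finset.sum_smul]
  congr 1
  exact Finset.sum_congr rfl fun t _ => by rw [transfer_coeff]

def gridFourierBasis : OrthonormalBasis (Grid N D) ℂ (EuclideanSpace ℂ (Grid N D)) :=
  OrthonormalBasis.mk (fourier_orthonormal N D) (by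
    have hli := (fourier_orthonormal N D).linearIndependent
    have hcard : Fintype.card (Grid N D)
        = Module.finrank ℂ (EuclideanSpace ℂ (Grid N D)) := (finrank_euclideanSpace).symm
    exact (hli.span_eq_top_of_card_eq_finrank hcard).ge)

lemma gridFourierBasis_apply (ω : Grid N D) : gridFourierBasis N D ω = fourierVec N D ω := by
  rw [gridFourierBasis, OrthonormalBasis.coe_mk]

theorem dog_opNorm_eq_max_transfer' (hD : 1 ≤ D)
    (T : Finset (Grid N D)) (p q : Grid N D → ℝ) :
    ‖dogOp N D T p q‖ =
      Finset.univ.sup' Finset.univ_nonempty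
        (fun ω : Grid N D => ‖transfer N D T p q ω‖) := by
  classical
  set A := dogOp N D T p q with hA
  set μ := transfer N D T p q with hμ
  set b := gridFourierBasis N D with hbdef
  set M := Finset.univ.sup' Finset.univ_nonempty
      (fun ω : Grid N D => ‖μ ω‖) with hM
  have hnorm1 : ∀ ω : Grid N D, ‖fourierVec N D ω‖ = 1 :=
    (fourier_orthonormal N D).1
  have habs_le : ∀ ω : Grid N D, ‖μ ω‖ ≤ M := fun ω =>
    Finset.le_sup' (fun ω => ‖μ ω‖) (Finset.mem_univ ω)
  have hM0 : 0 ≤ M :=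
    le_trans (norm_nonneg (μ 0)) (habs_le 0)
  apply le_antisymm
  · apply ContinuousLinearMap.opNorm_le_bound _ hM0
    intro v
    have hv := b.sum_repr v
    have hAv : A v = ∑ ω : Grid N D, (μ ω * b.repr v ω) • b ω := by
      conv_lhs => rw [← hv]
      rw [map_sum]
      refine Finset.sum_congr rfl fun ω _ => ?_
      rw [map_smul, gridFourierBasis_apply, dog_fourier, smul_smul, mul_comm,
        ← gridFourierBasis_apply]
    have hrep : ∀ ω : Grid N D, b.repr (A v) ω = μ ω * b.repr v ω := by
      intro ω
      rw [hAv, map_sum]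
      simp_rw [LinearIsometryEquiv.map_smul, OrthonormalBasis.repr_self]
      have hap : (∑ x : Grid N D, (μ x * b.repr v x) • EuclideanSpace.single x (1:ℂ)) ω
          = ∑ x : Grid N D, ((μ x * b.repr v x) • EuclideanSpace.single x (1:ℂ)) ω := by
        rw [WithLp.ofLp_sum]
        exact Finset.sum_apply ω Finset.univ _
      rw [hap]
      simp [EuclideanSpace.single_apply, PiLp.smul_apply]
    have h1 : ‖A v‖ = Real.sqrt (∑ ω : Grid N D, ‖b.repr (A v) ω‖ ^ 2) := by
      rw [← b.repr.norm_map (A v), EuclideanSpace.norm_eq]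
    have h2 : ‖v‖ = Real.sqrt (∑ ω : Grid N D, ‖b.repr v ω‖ ^ 2) := by
      rw [← b.repr.norm_map v, EuclideanSpace.norm_eq]
    rw [h1, h2, ← Real.sqrt_sq hM0, ← Real.sqrt_mul (sq_nonneg M)]
    apply Real.sqrt_le_sqrt
    rw [Finset.mul_sum]
    apply Finset.sum_le_sum
    intro ω _
    rw [hrep ω, norm_mul, mul_pow]
    apply mul_le_mul_of_nonneg_right _ (sq_nonneg _)
    apply pow_le_pow_left₀ (norm_nonneg _)
    exact habs_le ω
  · apply Finset.sup'_le
    intro ω _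
    have h := A.le_opNorm (fourierVec N D ω)
    rw [hA, dog_fourier, ← hA, ← hμ, norm_smul, hnorm1, mul_one, mul_one] at h
    exact h

end Chunk2

/-- for a symmetric stencil, the operator norm of the DoG operator equals the
maximum modulus of its transfer function over all frequencies. -/
theorem dog_opNorm_eq_max_transfer (N D : ℕ) [NeZero N] (hD : 1 ≤ D)
    (T : Finset (Grid N D)) (p q : Grid N D → ℝ)
    (hp : ∀ t ∈ T, 0 ≤ p t) (hq : ∀ t ∈ T, 0 ≤ q t)
    (hpsum : ∑ t ∈ T, p t = 1) (hqsum : ∑ t ∈ T, q t = 1)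
    (hTsym : ∀ t ∈ T, -t ∈ T)
    (hpsym : ∀ t ∈ T, p (-t) = p t) (hqsym : ∀ t ∈ T, q (-t) = q t) :
    ‖dogOp N D T p q‖ =
      Finset.univ.sup' Finset.univ_nonempty
        (fun ω : Grid N D => ‖transfer N D T p q ω‖) := by
  exact dog_opNorm_eq_max_transfer' N D hD T p q
end
end

section
/- For every vector v in the data space, the block-encoding success probability admits the closed form ‖(1/2) • A v‖² = (1/4) · ∑_{ω ∈ G} |μ(ω)|² · |⟪f_ω, v⟫|², where ⟪·,·⟫ is the ℓ² inner product; i.e. the squared norm of (1/2)A v equals one quarter of the power spectrum of v weighted by the squared transfer function. -/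
open scoped BigOperators

noncomputable section

namespace SPaux

set_option linter.unusedSectionVars false

variable (N D : ℕ) [NeZero N]
open Complex ZMod Finset

/-- The pairing, valued in `ZMod N`. -/
def P (ω j : Grid N D) : ZMod N := ∑ k, ω k * j k

lemma pairing_cast (ω j : Grid N D) : ((pairing N D ω j : ℕ) : ZMod N) = P N D ω j := by
  unfold pairing P; push_cast; simp [ZMod.natCast_zmod_val]

lemma exp_eq (m : ℕ) :
    Complex.exp (2 * Real.pi * Complex.I * (m : ℂ) / N) = ZMod.stdAddChar (m : ZMod N) := by
  simpa using (ZMod.stdAddChar_coe (N := N) (m : ℤ)).symm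

lemma exp_neg_eq (m : ℕ) :
    Complex.exp (-(2 * Real.pi * Complex.I * (m : ℂ)) / N) =
      ZMod.stdAddChar (-(m : ZMod N)) := by
  have := (ZMod.stdAddChar_coe (N := N) (-(m : ℤ)))
  push_cast at this
  rw [this]
  ring_nf

lemma conj_std (x : ZMod N) :
    (starRingEnd ℂ) (ZMod.stdAddChar x) = ZMod.stdAddChar (-x) := by
  rw [ZMod.stdAddChar_apply, ZMod.stdAddChar_apply, AddChar.map_neg_eq_inv,
    ← Circle.coe_inv_eq_conj, Circle.coe_inv]

lemma char_sum (t : ZMod N) :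
    ∑ i : ZMod N, ZMod.stdAddChar (t * i) = if t = 0 then (N : ℂ) else 0 := by
  split_ifs with h
  · simp [h, ZMod.card]
  · exact AddChar.sum_eq_zero_of_ne_one (ZMod.isPrimitive_stdAddChar N h)

lemma const_eq : (N : ℂ) ^ (-(D : ℂ) / 2) = (((N : ℝ) ^ (-(D : ℝ) / 2) : ℝ) : ℂ) := by
  rw [Complex.ofReal_cpow (by positivity)]
  push_cast
  ring_nf

lemma fourierVec_apply (ω j : Grid N D) :
    fourierVec N D ω j = (((N : ℝ) ^ (-(D : ℝ) / 2) : ℝ) : ℂ) * ZMod.stdAddChar (P N D ω j) := by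
  rw [fourierVec, const_eq]
  dsimp only
  rw [exp_eq, pairing_cast]

lemma P_add_right (ω j t : Grid N D) : P N D ω (j + t) = P N D ω j + P N D ω t := by
  unfold P; rw [← Finset.sum_add_distrib]; exact Finset.sum_congr rfl fun k _ => by
    simp [mul_add]

lemma P_sub_left (ω ω' j : Grid N D) : P N D (ω' - ω) j = P N D ω' j - P N D ω j := by
  unfold P; rw [← Finset.sum_sub_distrib]; exact Finset.sum_congr rfl fun k _ => by
    simp [sub_mul]

lemma ortho : Orthonormal ℂ (fourierVec N D) := by
  rw [orthonormal_iff_ite]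
  intro ω ω'
  have hNpos : (0 : ℝ) < (N : ℝ) := by exact_mod_cast Nat.pos_of_ne_zero (NeZero.ne N)
  rw [PiLp.inner_apply]
  have key : ∀ j : Grid N D,
      fourierVec N D ω' j * (starRingEnd ℂ) (fourierVec N D ω j) =
      ((((N : ℝ) ^ (-(D : ℝ) / 2) : ℝ) : ℂ) * (((N : ℝ) ^ (-(D : ℝ) / 2) : ℝ) : ℂ)) *
        ZMod.stdAddChar (P N D (ω' - ω) j) := by
    intro j
    rw [fourierVec_apply, fourierVec_apply, map_mul, Complex.conj_ofReal, conj_std,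
      P_sub_left, sub_eq_neg_add, AddChar.map_add_eq_mul]
    ring
  simp only [RCLike.inner_apply, key, ← Finset.mul_sum]
  have hsum : ∑ j : Grid N D, ZMod.stdAddChar (P N D (ω' - ω) j) =
      if ω = ω' then ((N : ℂ) ^ D) else 0 := by
    have : ∀ j : Grid N D, ZMod.stdAddChar (P N D (ω' - ω) j) =
        ∏ k, ZMod.stdAddChar ((ω' - ω) k * j k) := by
      intro j
      unfold P
      induction (Finset.univ : Finset (Fin D)) using Finset.cons_induction with
      | empty => simp
      | cons a s ha ih => rw [Finset.sum_cons, Finset.prod_cons, AddChar.map_add_eq_mul, ih]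
    simp only [this]
    rw [← Fintype.prod_sum (fun (k : Fin D) (x : ZMod N) => ZMod.stdAddChar ((ω' - ω) k * x))]
    simp only [char_sum]
    by_cases h : ω = ω'
    · simp [h]
    · rw [if_neg h]
      have : ∃ k, (ω' - ω) k ≠ 0 := by
        by_contra hc
        push_neg at hc
        apply h
        funext k
        have := hc k
        simpa [sub_eq_zero, eq_comm] using this
      obtain ⟨k, hk⟩ := this
      exact Finset.prod_eq_zero (Finset.mem_univ k) (by rw [if_neg hk])
  rw [hsum]
  split_ifs with h
  · have h1 : ((N : ℝ) ^ (-(D : ℝ) / 2) * (N : ℝ) ^ (-(D : ℝ) / 2)) * (N : ℝ) ^ (D : ℕ) = 1 := by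
      rw [← Real.rpow_natCast (N : ℝ) D, ← Real.rpow_add hNpos, ← Real.rpow_add hNpos]
      norm_num
    calc (((N : ℝ) ^ (-(D : ℝ) / 2) : ℝ) : ℂ) * (((N : ℝ) ^ (-(D : ℝ) / 2) : ℝ) : ℂ) * (N : ℂ) ^ D
        = ((((N : ℝ) ^ (-(D : ℝ) / 2) * (N : ℝ) ^ (-(D : ℝ) / 2)) * (N : ℝ) ^ (D : ℕ) : ℝ) : ℂ) := by
          push_cast; ring
      _ = 1 := by rw [h1]; norm_num
  · simp

lemma inner_shift (ω t : Grid N D) (v : EuclideanSpace ℂ (Grid N D)) :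
    (inner ℂ (fourierVec N D ω) (shiftOp N D t v) : ℂ) =
      ZMod.stdAddChar (-(P N D ω t)) * inner ℂ (fourierVec N D ω) v := by
  simp only [PiLp.inner_apply, RCLike.inner_apply]
  have hS : ∀ j : Grid N D, shiftOp N D t v j = v (j - t) := fun _ => rfl
  rw [Finset.mul_sum]
  rw [← Fintype.sum_equiv (Equiv.addRight t)
    (fun i => ZMod.stdAddChar (-(P N D ω t)) * (v i * (starRingEnd ℂ) (fourierVec N D ω i)))
    (fun j => shiftOp N D t v j * (starRingEnd ℂ) (fourierVec N D ω j))]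
  intro i
  simp only [hS, Equiv.coe_addRight]
  rw [add_sub_cancel_right]
  rw [fourierVec_apply, fourierVec_apply, map_mul, map_mul, Complex.conj_ofReal,
    conj_std, conj_std, P_add_right, neg_add, AddChar.map_add_eq_mul]
  ring

lemma inner_dog (T : Finset (Grid N D)) (p q : Grid N D → ℝ) (ω : Grid N D)
    (v : EuclideanSpace ℂ (Grid N D)) :
    (inner ℂ (fourierVec N D ω) (dogOp N D T p q v) : ℂ) =
      transfer N D T p q ω * inner ℂ (fourierVec N D ω) v := by
  rw [dogOp, ContinuousLinearMap.sum_apply, inner_sum, transfer, Finset.sum_mul]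
  refine Finset.sum_congr rfl fun t ht => ?_
  rw [ContinuousLinearMap.smul_apply, inner_smul_right, inner_shift, exp_neg_eq,
    pairing_cast]
  ring

lemma parseval (w : EuclideanSpace ℂ (Grid N D)) :
    ‖w‖ ^ 2 = ∑ ω : Grid N D, ‖(inner ℂ (fourierVec N D ω) w : ℂ)‖ ^ 2 := by
  have hcard : Fintype.card (Grid N D) = Module.finrank ℂ (EuclideanSpace ℂ (Grid N D)) := by
    simp [finrank_euclideanSpace]
  let bb := basisOfOrthonormalOfCardEqFinrank (ortho N D) hcard
  have hbb : ⇑bb = fourierVec N D := coe_basisOfOrthonormalOfCardEqFinrank _ _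
  have hob : Orthonormal ℂ bb := by rw [hbb]; exact ortho N D
  let b := bb.toOrthonormalBasis hob
  have hb : ⇑b = fourierVec N D := by
    rw [Module.Basis.coe_toOrthonormalBasis]; exact hbb
  have h1 : ‖w‖ = ‖b.repr w‖ := (b.repr.norm_map w).symm
  rw [h1, EuclideanSpace.norm_eq, Real.sq_sqrt (by positivity)]
  refine Finset.sum_congr rfl fun ω _ => ?_
  rw [b.repr_apply_apply, hb]

end SPaux

/-- closed-form success probability of the block encoding:
`‖(1/2) • A v‖² = (1/4) ∑_ω |μ(ω)|² |⟪f_ω, v⟫|²`. -/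
theorem success_probability_closed_form (N D : ℕ) [NeZero N] (hD : 1 ≤ D)
    (T : Finset (Grid N D)) (p q : Grid N D → ℝ)
    (hp : ∀ t ∈ T, 0 ≤ p t) (hq : ∀ t ∈ T, 0 ≤ q t)
    (hpsum : ∑ t ∈ T, p t = 1) (hqsum : ∑ t ∈ T, q t = 1)
    (v : EuclideanSpace ℂ (Grid N D)) :
    ‖((1 : ℂ) / 2) • dogOp N D T p q v‖ ^ 2 =
      (1 / 4 : ℝ) * ∑ ω : Grid N D,
        ‖transfer N D T p q ω‖ ^ 2 *
          ‖@inner ℂ _ _ (fourierVec N D ω) v‖ ^ 2 := by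
  have h1 : ‖((1 : ℂ) / 2) • dogOp N D T p q v‖ = (1 / 2 : ℝ) * ‖dogOp N D T p q v‖ := by
    rw [norm_smul]; norm_num
  have h2 : ∀ ω : Grid N D,
      ‖(inner ℂ (fourierVec N D ω) (dogOp N D T p q v) : ℂ)‖ ^ 2 =
        ‖transfer N D T p q ω‖ ^ 2 *
          ‖@inner ℂ _ _ (fourierVec N D ω) v‖ ^ 2 := by
    intro ω
    rw [SPaux.inner_dog, norm_mul, mul_pow]
  rw [h1, mul_pow, SPaux.parseval]
  simp only [h2]
  norm_num
end
end

section
/- Let T ⊂ ℤ^D be finite and symmetric (−t ∈ T iff t ∈ T) and c : (Fin D → ℤ) → ℝ supported on T with ∑_{t∈T} c t = 0, c(−t) = c(t), and ∑_{t∈T} c t · (t i) · (t j) = (S/D) · δ_{ij} for all i, j, where S = ∑_{t∈T} c t · ‖t‖². Let v : (Fin D → ℝ) → ℝ be four times continuously differentiable (ContDiff ℝ 4). Then for every point x, the function h ↦ (∑_{t∈T} c t · v(x + h • t)) − (S/(2D)) · h² · Δv(x) is O(h⁴) as h → 0, where Δv(x) is the Laplacian of v at x (the trace of the Hessian) and t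 is viewed in ℝ^D via the coordinatewise integer cast. -/
open scoped BigOperators
open Asymptotics

noncomputable section

/-- The Laplacian of `v` at `x`: the sum of the pure second partial derivatives, i.e. the
trace of the Hessian. -/
def laplacian {D : ℕ} (v : (Fin D → ℝ) → ℝ) (x : Fin D → ℝ) : ℝ :=
  ∑ i : Fin D, iteratedFDeriv ℝ 2 v x (fun _ => Pi.single i 1)


private lemma step_isBigO {f f' : ℝ → ℝ} {k : ℕ}
    (hd : ∀ y, HasDerivAt f (f' y) y) (h0 : f 0 = 0)
    (hO : f' =O[nhds (0:ℝ)] fun h => h ^ k) :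
    f =O[nhds (0:ℝ)] fun h => h ^ (k+1) := by
  obtain ⟨C, hC0, hC⟩ := hO.exists_nonneg
  rw [IsBigOWith, Metric.eventually_nhds_iff] at hC
  obtain ⟨δ, hδ, hCb⟩ := hC
  rw [isBigO_iff]
  refine ⟨C, Metric.eventually_nhds_iff.mpr ⟨δ, hδ, ?_⟩⟩
  intro h hh
  simp only [Real.dist_eq, sub_zero] at hh
  have key : ‖f h - f 0‖ ≤ (C * |h| ^ k) * ‖h - 0‖ := by
    apply Convex.norm_image_sub_le_of_norm_deriv_le (𝕜 := ℝ) (s := Set.uIcc 0 h)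
      (fun y _ => (hd y).differentiableAt) ?_ (convex_uIcc _ _)
      Set.left_mem_uIcc Set.right_mem_uIcc
    intro y hy
    have h1 : |y| ≤ |h| := by
      rcases Set.mem_uIcc.mp hy with ⟨a, b⟩ | ⟨a, b⟩ <;>
        rcases abs_cases h with ⟨e1, e2⟩ | ⟨e1, e2⟩ <;>
        rcases abs_cases y with ⟨g1, g2⟩ | ⟨g1, g2⟩ <;> linarith
    have h2 : dist y 0 < δ := by
      simp only [Real.dist_eq, sub_zero]; exact lt_of_le_of_lt h1 hh
    calc ‖deriv f y‖ = ‖f' y‖ := by rw [(hd y).deriv]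
      _ ≤ C * ‖y ^ k‖ := hCb h2
      _ ≤ C * |h| ^ k := by
          rw [norm_pow, Real.norm_eq_abs]
          exact mul_le_mul_of_nonneg_left (pow_le_pow_left₀ (abs_nonneg _) h1 k) hC0
  rw [h0, sub_zero, sub_zero] at key
  calc ‖f h‖ ≤ C * |h| ^ k * ‖h‖ := key
    _ = C * ‖h ^ (k+1)‖ := by
        rw [norm_pow, Real.norm_eq_abs, pow_succ]; ring

private lemma sum_eq_zero_of_odd {D : ℕ} (T : Finset (Fin D → ℤ))
    (hsym : ∀ t, t ∈ T ↔ -t ∈ T) (f : (Fin D → ℤ) → ℝ)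
    (hodd : ∀ t ∈ T, f (-t) = - f t) : ∑ t ∈ T, f t = 0 := by
  have h1 : ∑ t ∈ T, f t = ∑ t ∈ T, f (-t) := by
    refine Finset.sum_nbij' (fun t => -t) (fun t => -t) ?_ ?_ ?_ ?_ ?_
    · intro t ht; exact (hsym t).mp ht
    · intro t ht; exact (hsym t).mp ht
    · intro t _; simp
    · intro t _; simp
    · intro t _; simp
  have h2 : ∑ t ∈ T, f (-t) = - ∑ t ∈ T, f t := by
    rw [← Finset.sum_neg_distrib]
    exact Finset.sum_congr rfl hodd
  linarith [h1, h2]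

private lemma bilin_expand {D : ℕ} (T : Finset (Fin D → ℤ)) (c : (Fin D → ℤ) → ℝ)
    (S : ℝ)
    (hiso : ∀ i j : Fin D,
      ∑ t ∈ T, c t * (t i : ℝ) * (t j : ℝ) = (S / (D : ℝ)) * (if i = j then 1 else 0))
    (u : (Fin D → ℝ) →L[ℝ] (Fin D → ℝ) →L[ℝ] ℝ) :
    ∑ t ∈ T, c t * u (fun i => (t i : ℝ)) (fun i => (t i : ℝ)) =
      (S / D) * ∑ i, u (Pi.single i 1) (Pi.single i 1) := by
  have single_eq : ∀ i : Fin D, (Pi.single i 1 : Fin D → ℝ) = fun j => if i = j then 1 else 0 := by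
    intro i; funext j; rw [Pi.single_apply]; simp [eq_comm]
  have expand : ∀ w : Fin D → ℝ,
      u w w = ∑ i, ∑ j, w i * w j * u (Pi.single i 1) (Pi.single j 1) := by
    intro w
    conv_lhs => rw [pi_eq_sum_univ w]
    simp only [map_sum, map_smul, ContinuousLinearMap.sum_apply,
      ContinuousLinearMap.coe_sum', Finset.sum_apply, ContinuousLinearMap.smul_apply,
      ContinuousLinearMap.coe_smul', Pi.smul_apply, smul_eq_mul, single_eq]
    rw [Finset.sum_comm]
    refine Finset.sum_congr rfl fun i _ => ?_
    rw [Finset.mul_sum]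
    refine Finset.sum_congr rfl fun j _ => by ring
  calc ∑ t ∈ T, c t * u (fun i => (t i : ℝ)) (fun i => (t i : ℝ))
      = ∑ t ∈ T, ∑ i, ∑ j, (c t * (t i : ℝ) * (t j : ℝ)) * u (Pi.single i 1) (Pi.single j 1) := by
        refine Finset.sum_congr rfl fun t _ => ?_
        rw [expand, Finset.mul_sum]
        refine Finset.sum_congr rfl fun i _ => ?_
        rw [Finset.mul_sum]
        exact Finset.sum_congr rfl fun j _ => by ring
    _ = ∑ i, ∑ j, (∑ t ∈ T, c t * (t i : ℝ) * (t j : ℝ)) * u (Pi.single i 1) (Pi.single j 1) := by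
        rw [Finset.sum_comm]
        refine Finset.sum_congr rfl fun i _ => ?_
        rw [Finset.sum_comm]
        refine Finset.sum_congr rfl fun j _ => ?_
        rw [Finset.sum_mul]
    _ = (S / D) * ∑ i, u (Pi.single i 1) (Pi.single i 1) := by
        rw [Finset.mul_sum]
        refine Finset.sum_congr rfl fun i _ => ?_
        rw [Finset.sum_eq_single i]
        · rw [hiso]; simp
        · intro j _ hj; rw [hiso]; simp [Ne.symm hj]
        · intro h; exact absurd (Finset.mem_univ i) h

/-- for a symmetric, zero-mean, isotropic stencil `c` supported on the finite set
`T ⊆ ℤ^D` and a `C⁴` function `v`, at every point `x` the stencil sum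
`∑_{t ∈ T} c t · v(x + h • t)` equals `(S/(2D)) h² Δv(x)` up to an `O(h⁴)` error as `h → 0`,
where `S = ∑_{t ∈ T} c t ‖t‖²`. -/
theorem dog_taylor_laplacian (D : ℕ) (hD : 1 ≤ D)
    (T : Finset (Fin D → ℤ)) (c : (Fin D → ℤ) → ℝ)
    (hsym : ∀ t, t ∈ T ↔ -t ∈ T)
    (hsupp : ∀ t ∉ T, c t = 0)
    (hsum : ∑ t ∈ T, c t = 0)
    (heven : ∀ t, c (-t) = c t)
    (S : ℝ) (hS : S = ∑ t ∈ T, c t * ∑ i, (t i : ℝ) ^ 2)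
    (hiso : ∀ i j : Fin D,
      ∑ t ∈ T, c t * (t i : ℝ) * (t j : ℝ) = (S / (D : ℝ)) * (if i = j then 1 else 0))
    (v : (Fin D → ℝ) → ℝ) (hv : ContDiff ℝ 4 v) (x : Fin D → ℝ) :
    (fun h : ℝ =>
        (∑ t ∈ T, c t * v (x + h • fun i => (t i : ℝ))) -
          (S / (2 * (D : ℝ))) * h ^ 2 * laplacian v x)
      =O[nhds (0 : ℝ)] fun h : ℝ => h ^ 4 := by
  
  have hD0 : (D : ℝ) ≠ 0 := by positivity
  set A1 := fderiv ℝ v with hA1def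
  set A2 := fderiv ℝ A1 with hA2def
  set A3 := fderiv ℝ A2 with hA3def
  have hA1 : ContDiff ℝ 3 A1 := hv.fderiv_right (by norm_num)
  have hA2 : ContDiff ℝ 2 A2 := hA1.fderiv_right (by norm_num)
  have hA3 := hA2.fderiv_right (m := 1) (by norm_num)
  set w : (Fin D → ℤ) → (Fin D → ℝ) := fun t i => (t i : ℝ) with hwdef
  set ψ : (Fin D → ℤ) → ℝ → (Fin D → ℝ) := fun t h => x + h • w t with hψdef
  have hψ : ∀ t, ∀ h : ℝ, HasDerivAt (ψ t) (w t) h := by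
    intro t h
    simpa [hψdef] using (((hasDerivAt_id h).smul_const (w t)).const_add x)
  have hψ0 : ∀ t, ψ t 0 = x := by intro t; simp [hψdef]
  have hwneg : ∀ t, w (-t) = - w t := by
    intro t; funext i; simp [hwdef]
  -- derivative chain
  have hφ1 : ∀ t, ∀ h : ℝ, HasDerivAt (fun h => v (ψ t h)) (A1 (ψ t h) (w t)) h := by
    intro t h
    exact
      ((hv.differentiable (by norm_num)) (ψ t h)).hasFDerivAt.comp_hasDerivAt h (hψ t h)
  have hφ2 : ∀ t, ∀ h : ℝ,
      HasDerivAt (fun h => A1 (ψ t h) (w t)) (A2 (ψ t h) (w t) (w t)) h := by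
    intro t h
    have hF : HasFDerivAt (fun y => A1 y (w t)) ((A2 (ψ t h)).flip (w t)) (ψ t h) := by
      have := ((hA1.differentiable (by norm_num)) (ψ t h)).hasFDerivAt.clm_apply
        (hasFDerivAt_const (w t) (ψ t h))
      simpa using this
    exact hF.comp_hasDerivAt h (hψ t h)
  have hφ3 : ∀ t, ∀ h : ℝ,
      HasDerivAt (fun h => A2 (ψ t h) (w t) (w t)) (A3 (ψ t h) (w t) (w t) (w t)) h := by
    intro t h
    have hF1 : HasFDerivAt (fun y => A2 y (w t)) ((A3 (ψ t h)).flip (w t)) (ψ t h) := by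
      have := ((hA2.differentiable (by norm_num)) (ψ t h)).hasFDerivAt.clm_apply
        (hasFDerivAt_const (w t) (ψ t h))
      simpa using this
    have hF2 : HasFDerivAt (fun y => A2 y (w t) (w t))
        (((A3 (ψ t h)).flip (w t)).flip (w t)) (ψ t h) := by
      have := hF1.clm_apply (hasFDerivAt_const (w t) (ψ t h))
      simpa using this
    exact hF2.comp_hasDerivAt h (hψ t h)
  have hφ4 : ∀ t, DifferentiableAt ℝ (fun h => A3 (ψ t h) (w t) (w t) (w t)) 0 := by
    intro t
    have : DifferentiableAt ℝ (fun y => A3 y (w t) (w t) (w t)) (ψ t 0) :=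
      ((((hA3.differentiable (by norm_num)) (ψ t 0)).clm_apply
        (differentiableAt_const (w t))).clm_apply
        (differentiableAt_const (w t))).clm_apply (differentiableAt_const (w t))
    exact this.comp 0 (hψ t 0).differentiableAt
  set L := laplacian v x with hLdef
  -- r functions
  set G1 : ℝ → ℝ := fun h => ∑ t ∈ T, c t * A1 (ψ t h) (w t) with hG1def
  set G2 : ℝ → ℝ := fun h => ∑ t ∈ T, c t * A2 (ψ t h) (w t) (w t) with hG2def
  set G3 : ℝ → ℝ := fun h => ∑ t ∈ T, c t * A3 (ψ t h) (w t) (w t) (w t) with hG3def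
  set r0 : ℝ → ℝ := fun h =>
    (∑ t ∈ T, c t * v (ψ t h)) - (S / (2 * (D : ℝ))) * h ^ 2 * L with hr0def
  set r1 : ℝ → ℝ := fun h => G1 h - (S / (2 * (D : ℝ))) * (2 * h) * L with hr1def
  set r2 : ℝ → ℝ := fun h => G2 h - (S / (2 * (D : ℝ))) * 2 * L with hr2def
  -- HasDerivAt chains for r
  have hdr0 : ∀ y : ℝ, HasDerivAt r0 (r1 y) y := by
    intro y
    have hg : HasDerivAt (fun h => ∑ t ∈ T, c t * v (ψ t h)) (G1 y) y :=
      HasDerivAt.fun_sum fun t _ => (hφ1 t y).const_mul (c t)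
    have hq : HasDerivAt (fun h : ℝ => (S / (2 * (D : ℝ))) * h ^ 2 * L)
        ((S / (2 * (D : ℝ))) * (2 * y) * L) y := by
      have := ((hasDerivAt_pow 2 y).const_mul (S / (2 * (D : ℝ)))).mul_const L
      refine this.congr_deriv ?_
      ring
    exact hg.sub hq
  have hdr1 : ∀ y : ℝ, HasDerivAt r1 (r2 y) y := by
    intro y
    have hg : HasDerivAt G1 (G2 y) y :=
      HasDerivAt.fun_sum fun t _ => (hφ2 t y).const_mul (c t)
    have hq : HasDerivAt (fun h : ℝ => (S / (2 * (D : ℝ))) * (2 * h) * L)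
        ((S / (2 * (D : ℝ))) * 2 * L) y := by
      have := (((hasDerivAt_id y).const_mul (2 : ℝ)).const_mul (S / (2 * (D : ℝ)))).mul_const L
      refine this.congr_deriv ?_
      ring
    exact hg.sub hq
  have hdr2 : ∀ y : ℝ, HasDerivAt r2 (G3 y) y := by
    intro y
    have hg : HasDerivAt G2 (G3 y) y :=
      HasDerivAt.fun_sum fun t _ => (hφ3 t y).const_mul (c t)
    exact hg.sub_const _
  -- values at 0
  have key0 : r0 0 = 0 := by
    simp only [hr0def, hψ0]
    rw [← Finset.sum_mul, hsum]
    ring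
  have key1 : r1 0 = 0 := by
    simp only [hr1def, hG1def, hψ0]
    rw [sum_eq_zero_of_odd T hsym _ ?_]
    · ring
    · intro t _
      rw [heven, hwneg, map_neg]
      ring
  have key2 : r2 0 = 0 := by
    have hL : L = ∑ i, A2 x (Pi.single i 1) (Pi.single i 1) := by
      rw [hLdef]
      unfold laplacian
      refine Finset.sum_congr rfl fun i _ => ?_
      rw [iteratedFDeriv_two_apply]
    have this' : ∑ t ∈ T, c t * A2 x (w t) (w t) =
        (S / D) * ∑ i, A2 x (Pi.single i 1) (Pi.single i 1) := bilin_expand T c S hiso (A2 x)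
    simp only [hr2def, hG2def, hψ0]
    rw [this', ← hL]
    field_simp
    ring
  have key3 : G3 0 = 0 := by
    simp only [hG3def, hψ0]
    rw [sum_eq_zero_of_odd T hsym _ ?_]
    intro t _
    rw [heven, hwneg]
    simp only [map_neg, ContinuousLinearMap.neg_apply]
    ring
  -- pipeline
  have O3 : G3 =O[nhds (0:ℝ)] fun h => h ^ 1 := by
    have hd : DifferentiableAt ℝ G3 0 :=
      DifferentiableAt.fun_sum fun t _ => ((hφ4 t).const_mul (c t))
    have := hd.isBigO_sub
    simpa [key3, pow_one] using this
  have O2 : r2 =O[nhds (0:ℝ)] fun h => h ^ 2 := step_isBigO hdr2 key2 O3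
  have O1 : r1 =O[nhds (0:ℝ)] fun h => h ^ 3 := step_isBigO hdr1 key1 O2
  have O0 : r0 =O[nhds (0:ℝ)] fun h => h ^ 4 := step_isBigO hdr0 key0 O1
  exact O0
end
end
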